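/- arXiv:1204.5078 — 7 statements merged into one kernel-verified Lean document; each statement's English description precedes it below -/
import Mathlib

section
/- Let F : ℂ → ℂ be continuous on the closed strip 𝒯¹ and holomorphic on its interior. If there exist real numbers a < b such that F(t) = 0 for every t in the open interval (a, b) ⊂ ℝ, then F vanishes identically on 𝒯¹. -/
/-!
Extend `F` by `0` below the real axis. Because `F` vanishes on `(a, b)`, the extension is
continuous on the rectangle `(a, b) × (-1, 1)`, and it is holomorphic off the real axis. Cutting a
rectangle along the real axis and applying Cauchy–Goursat to the two halves shows that all its
rectangle integrals vanish, so by Morera's theorem it is holomorphic on the whole rectangle.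
It vanishes below the axis, hence everywhere by the identity theorem. Thus `F` vanishes on an open
subset of the open strip, hence on the open strip, and by continuity on its closure.
-/

open Complex Set Filter Topology
open scoped Interval

lemma Convex.reProdIm {s t : Set ℝ} (hs : Convex ℝ s) (ht : Convex ℝ t) :
    Convex ℝ (s ×ℂ t) :=
  (hs.linear_preimage reLm).inter (ht.linear_preimage imLm)

section RectangleIntegral

variable {E : Type*} [NormedAddCommGroup E] {f : ℂ → E} {z w : ℂ}

lemma ContinuousOn.intervalIntegrable_vertical (hf : ContinuousOn f (Rectangle z w)) {x c d : ℝ}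
    (hx : x ∈ [[z.re, w.re]]) (hcd : [[c, d]] ⊆ [[z.im, w.im]]) :
    IntervalIntegrable (fun y : ℝ => f (x + y * I)) MeasureTheory.volume c d := by
  refine (hf.comp (by fun_prop) fun y hy => ?_).intervalIntegrable
  simpa [Rectangle, mem_reProdIm] using ⟨hx, hcd hy⟩

variable [NormedSpace ℂ E]

noncomputable def rectBoundaryIntegral (f : ℂ → E) (z w : ℂ) : E :=
  (∫ x : ℝ in z.re..w.re, f (x + z.im * I)) - (∫ x : ℝ in z.re..w.re, f (x + w.im * I)) +
    I • (∫ y : ℝ in z.im..w.im, f (w.re + y * I)) - I • (∫ y : ℝ in z.im..w.im, f (z.re + y * I))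

lemma rectBoundaryIntegral_eq_add (hf : ContinuousOn f (Rectangle z w)) {c : ℝ}
    (hc : c ∈ [[z.im, w.im]]) :
    rectBoundaryIntegral f z w =
      rectBoundaryIntegral f z ⟨w.re, c⟩ + rectBoundaryIntegral f ⟨z.re, c⟩ w := by
  have hw := right_mem_uIcc (a := z.re) (b := w.re)
  have hz := left_mem_uIcc (a := z.re) (b := w.re)
  simp only [rectBoundaryIntegral]
  rw [← intervalIntegral.integral_add_adjacent_intervals
      (hf.intervalIntegrable_vertical hw (uIcc_subset_uIcc_left hc))
      (hf.intervalIntegrable_vertical hw (uIcc_subset_uIcc_right hc)),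
    ← intervalIntegral.integral_add_adjacent_intervals
      (hf.intervalIntegrable_vertical hz (uIcc_subset_uIcc_left hc))
      (hf.intervalIntegrable_vertical hz (uIcc_subset_uIcc_right hc))]
  simp only [smul_add]
  abel

lemma rectBoundaryIntegral_eq_zero_of_notMem_Ioo (hc : ContinuousOn f (Rectangle z w))
    (hd : DifferentiableOn ℂ f (Rectangle z w \ {u : ℂ | u.im = 0}))
    (h0 : (0 : ℝ) ∉ uIoo z.im w.im) :
    rectBoundaryIntegral f z w = 0 := by
  refine integral_boundary_rect_eq_zero_of_continuousOn_of_differentiableOn f z w hc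
    (hd.mono fun u hu => ⟨?_, fun hu0 => h0 (hu0 ▸ hu.2)⟩)
  exact ⟨Ioo_subset_Icc_self hu.1, Ioo_subset_Icc_self hu.2⟩

lemma rectBoundaryIntegral_eq_zero_of_differentiableOn_off_real
    (hc : ContinuousOn f (Rectangle z w))
    (hd : DifferentiableOn ℂ f (Rectangle z w \ {u : ℂ | u.im = 0})) :
    rectBoundaryIntegral f z w = 0 := by
  by_cases h0 : (0 : ℝ) ∈ [[z.im, w.im]]
  · have hlow : Rectangle z ⟨w.re, 0⟩ ⊆ Rectangle z w := fun u hu =>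
      ⟨hu.1, uIcc_subset_uIcc_left h0 hu.2⟩
    have hup : Rectangle ⟨z.re, 0⟩ w ⊆ Rectangle z w := fun u hu =>
      ⟨hu.1, uIcc_subset_uIcc_right h0 hu.2⟩
    rw [rectBoundaryIntegral_eq_add hc h0,
      rectBoundaryIntegral_eq_zero_of_notMem_Ioo (hc.mono hlow)
        (hd.mono (sdiff_subset_sdiff_left hlow)) right_notMem_uIoo,
      rectBoundaryIntegral_eq_zero_of_notMem_Ioo (hc.mono hup)
        (hd.mono (sdiff_subset_sdiff_left hup)) left_notMem_uIoo, add_zero]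
  · exact rectBoundaryIntegral_eq_zero_of_notMem_Ioo hc hd fun h => h0 (uIoo_subset_uIcc_self h)

end RectangleIntegral

section Holomorphy

variable {E : Type*} [NormedAddCommGroup E] [NormedSpace ℂ E] [CompleteSpace E] {f : ℂ → E}
  {U : Set ℂ}

theorem differentiableOn_of_differentiableOn_off_real (hU : IsOpen U) (hc : ContinuousOn f U)
    (hd : DifferentiableOn ℂ f (U \ {z : ℂ | z.im = 0})) : DifferentiableOn ℂ f U := by
  refine (isConservativeOn_and_continuousOn_iff_isDifferentiableOn hU).mp ⟨fun z w hzw => ?_, hc⟩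
  rw [← add_eq_zero_iff_eq_neg, wedgeIntegral_add_wedgeIntegral_eq]
  exact rectBoundaryIntegral_eq_zero_of_differentiableOn_off_real (hc.mono hzw)
    (hd.mono (sdiff_subset_sdiff_left hzw))

theorem eqOn_zero_upper_of_eqOn_zero_real_axis (hU : IsOpen U) (hUc : IsPreconnected U)
    (hUlow : (U ∩ {z | z.im < 0}).Nonempty) (hc : ContinuousOn f (U ∩ {z | 0 ≤ z.im}))
    (hd : DifferentiableOn ℂ f (U ∩ {z | 0 < z.im})) (h0 : EqOn f 0 (U ∩ {z : ℂ | z.im = 0})) :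
    EqOn f 0 (U ∩ {z | 0 < z.im}) := by
  set g : ℂ → E := fun z => if 0 ≤ z.im then f z else 0
  have hupper : IsOpen {z : ℂ | 0 < z.im} := isOpen_lt continuous_const continuous_im
  have hlower : IsOpen {z : ℂ | z.im < 0} := isOpen_lt continuous_im continuous_const
  have hgc : ContinuousOn g U := by
    refine ContinuousOn.if (fun z hz => ?_) ?_ continuousOn_const
    · rw [frontier_setOfPred_le_im] at hz
      exact h0 hz
    · rwa [(isClosed_le continuous_const continuous_im).closure_eq]
  have hgd : DifferentiableOn ℂ g (U \ {z : ℂ | z.im = 0}) := by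
    rintro z ⟨hzU, hz0⟩
    rcases lt_or_gt_of_ne hz0 with hneg | hpos
    · have : g =ᶠ[𝓝 z] 0 := by
        filter_upwards [hlower.mem_nhds hneg] with u hu
        simp [g, not_le.mpr (show u.im < 0 from hu)]
      exact (differentiableAt_const (0 : E)).congr_of_eventuallyEq this |>.differentiableWithinAt
    · have : g =ᶠ[𝓝 z] f := by
        filter_upwards [hupper.mem_nhds hpos] with u hu
        simp [g, le_of_lt (show 0 < u.im from hu)]
      exact ((hd.differentiableAt ((hU.inter hupper).mem_nhds ⟨hzU, hpos⟩)).congr_of_eventuallyEq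
        this).differentiableWithinAt
  obtain ⟨z₀, hz₀U, hz₀⟩ := hUlow
  have hg0 : EqOn g 0 U := by
    refine ((differentiableOn_of_differentiableOn_off_real hU hgc hgd).analyticOnNhd hU
      ).eqOn_zero_of_preconnected_of_eventuallyEq_zero hUc hz₀U ?_
    filter_upwards [hlower.mem_nhds hz₀] with u hu
    simp [g, not_le.mpr (show u.im < 0 from hu)]
  intro z hz
  simpa [g, le_of_lt (show 0 < z.im from hz.2)] using hg0 hz.1

end Holomorphy

/-- The closed strip `𝒯¹ = {z ∈ ℂ : 0 ≤ Im z ≤ 1}`. If `F` is continuous on `𝒯¹`,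
holomorphic on its interior, and vanishes on a nonempty open real interval `(a, b)`,
then `F` vanishes identically on `𝒯¹`. -/
theorem strip_vanishes_of_vanishes_on_real_interval
    (F : ℂ → ℂ)
    (hcont : ContinuousOn F {z : ℂ | 0 ≤ z.im ∧ z.im ≤ 1})
    (hdiff : DifferentiableOn ℂ F {z : ℂ | 0 < z.im ∧ z.im < 1})
    (a b : ℝ) (hab : a < b)
    (hvanish : ∀ t : ℝ, a < t → t < b → F (t : ℂ) = 0) :
    ∀ z : ℂ, 0 ≤ z.im → z.im ≤ 1 → F z = 0 := by
  have hU : IsOpen {z : ℂ | 0 < z.im ∧ z.im < 1} := isOpen_Ioo.preimage continuous_im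
  set R : Set ℂ := Ioo a b ×ℂ Ioo (-1) 1
  have hR : IsOpen R := isOpen_Ioo.reProdIm isOpen_Ioo
  have hRF : EqOn F 0 (R ∩ {z | 0 < z.im}) := by
    refine eqOn_zero_upper_of_eqOn_zero_real_axis hR
      ((convex_Ioo a b).reProdIm (convex_Ioo _ _)).isPreconnected
      ⟨⟨(a + b) / 2, -1 / 2⟩, ⟨⟨by linarith, by linarith⟩, by norm_num⟩, by norm_num⟩
      (hcont.mono fun z hz => ⟨hz.2, hz.1.2.2.le⟩)
      (hdiff.mono fun z hz => ⟨hz.2, hz.1.2.2⟩) fun z ⟨hzR, hz0⟩ => ?_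
    rw [← re_add_im z, show z.im = 0 from hz0, ofReal_zero, zero_mul, add_zero]
    exact hvanish _ hzR.1.1 hzR.1.2
  have hUF : EqOn F 0 {z : ℂ | 0 < z.im ∧ z.im < 1} := by
    refine (hdiff.analyticOnNhd hU).eqOn_zero_of_preconnected_of_eventuallyEq_zero
      ((convex_Ioo 0 1).linear_preimage imLm).isPreconnected
      (z₀ := ⟨(a + b) / 2, 1 / 2⟩) (by norm_num) ?_
    have hz₀ : (⟨(a + b) / 2, 1 / 2⟩ : ℂ) ∈ R ∩ {z | 0 < z.im} :=
      ⟨⟨⟨by linarith, by linarith⟩, by norm_num⟩, by norm_num⟩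
    filter_upwards [(hR.inter (isOpen_lt continuous_const continuous_im)).mem_nhds hz₀]
      with z hz using hRF hz
  intro z h0 h1
  refine hUF.of_subset_closure hcont continuousOn_const (fun z hz => ⟨hz.1.le, hz.2.le⟩) ?_ ⟨h0, h1⟩
  change _ ⊆ closure (im ⁻¹' Ioo 0 1)
  rw [closure_preimage_im, closure_Ioo zero_ne_one]
  exact fun z hz => hz
end

section
/- Let F : ℂ → ℂ be continuous on the closed strip 𝒯¹, holomorphic on its interior, and suppose F(t + i) = F(t) for all t ∈ ℝ. If there exist a constant C > 0 and a natural number p such that |F(z)| ≤ C (1 + |Re z|)^p for all z ∈ 𝒯¹, then F is constant on 𝒯¹. -/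
/-
The `i`-periodic extension of `F` to `ℂ` is continuous thanks to the boundary condition, hence
entire by Morera's theorem: a rectangle crossing one of the lines `Im z ∈ ℤ` splits into two
rectangles with one side on the line, whose boundary integrals vanish by Cauchy's theorem.
After rotating by `i`, the extension becomes a `1`-periodic entire function `g` with
`‖g z‖ ≤ C (1 + |Im z|) ^ p`, so `g z = G (exp (2πiz))` with `G` holomorphic on `ℂ \ {0}` and
`‖G q‖ ≤ C (1 + |log ‖q‖| / 2π) ^ p`. That growth is `o(1 / ‖q‖)` at `0`, so the singularity of `G`
at `0` is removable; hence `g` is bounded on the upper half-plane, likewise (apply this to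
`z ↦ g (-z)`) on the lower one, and constant by Liouville's theorem.
-/

open Complex Set Filter Topology Asymptotics
open scoped Interval Real

namespace Complex

variable {E : Type*} [NormedAddCommGroup E] [NormedSpace ℂ E] {f : ℂ → E} {U : Set ℂ} {c : ℝ}

theorem wedgeIntegral_add_wedgeIntegral_eq_zero_of_notMem_Ioo {z w : ℂ}
    (hf : ContinuousOn f U) (hd : DifferentiableOn ℂ f (U \ im ⁻¹' {c}))
    (hzw : Rectangle z w ⊆ U) (hc : c ∉ Ioo (min z.im w.im) (max z.im w.im)) :
    wedgeIntegral z w f + wedgeIntegral w z f = 0 := by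
  rw [wedgeIntegral_add_wedgeIntegral_eq]
  refine integral_boundary_rect_eq_zero_of_continuousOn_of_differentiableOn f z w
    (hf.mono hzw) (hd.mono fun x hx ↦ ⟨hzw ?_, fun hxc ↦ hc (hxc ▸ hx.2)⟩)
  exact ⟨Ioo_subset_Icc_self hx.1, Ioo_subset_Icc_self hx.2⟩

theorem wedgeIntegral_add_wedgeIntegral_split {z w : ℂ} (hf : ContinuousOn f (Rectangle z w))
    (hc : c ∈ [[z.im, w.im]]) :
    wedgeIntegral z w f + wedgeIntegral w z f =
      (wedgeIntegral z (w.re + c * I) f + wedgeIntegral (w.re + c * I) z f) +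
      (wedgeIntegral (z.re + c * I) w f + wedgeIntegral w (z.re + c * I) f) := by
  have vertical : ∀ x ∈ [[z.re, w.re]], ∀ a ∈ [[z.im, w.im]], ∀ b ∈ [[z.im, w.im]],
      IntervalIntegrable (fun y : ℝ ↦ f (x + y * I)) MeasureTheory.volume a b := by
    intro x hx a ha b hb
    refine ContinuousOn.intervalIntegrable (hf.comp (by fun_prop) fun y hy ↦ ?_)
    simp only [Rectangle, mem_reProdIm, add_re, ofReal_re, mul_re, I_re, mul_zero, ofReal_im,
      I_im, mul_one, sub_self, add_zero, add_im, mul_im, zero_add]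
    exact ⟨hx, uIcc_subset_uIcc ha hb hy⟩
  simp only [wedgeIntegral, add_re, ofReal_re, mul_re, I_re, mul_zero, ofReal_im, I_im, mul_one,
    sub_self, add_zero, add_im, mul_im, zero_add]
  rw [← intervalIntegral.integral_add_adjacent_intervals
      (vertical w.re right_mem_uIcc _ left_mem_uIcc _ hc)
      (vertical w.re right_mem_uIcc _ hc _ right_mem_uIcc),
    ← intervalIntegral.integral_add_adjacent_intervals
      (vertical z.re left_mem_uIcc _ right_mem_uIcc _ hc)
      (vertical z.re left_mem_uIcc _ hc _ left_mem_uIcc)]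
  simp only [smul_add, intervalIntegral.integral_symm w.re z.re]
  abel

theorem differentiableOn_of_differentiableOn_diff_im_preimage [CompleteSpace E] (hU : IsOpen U)
    (hf : ContinuousOn f U) (hd : DifferentiableOn ℂ f (U \ im ⁻¹' {c})) :
    DifferentiableOn ℂ f U := by
  refine (isConservativeOn_and_continuousOn_iff_isDifferentiableOn hU).1 ⟨fun z w hzw ↦ ?_, hf⟩
  rw [← add_eq_zero_iff_eq_neg]
  by_cases hc : c ∈ Ioo (min z.im w.im) (max z.im w.im)
  · have hc' : c ∈ [[z.im, w.im]] := Ioo_subset_Icc_self hc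
    have lower : Rectangle z (w.re + c * I) ⊆ Rectangle z w := fun x hx ↦ by
      simp only [Rectangle, mem_reProdIm] at hx ⊢
      simp only [add_re, ofReal_re, re_ofReal_mul, I_re, mul_zero, add_zero, add_im, ofReal_im,
        im_ofReal_mul, I_im, mul_one, zero_add] at hx
      exact ⟨hx.1, uIcc_subset_uIcc left_mem_uIcc hc' hx.2⟩
    have upper : Rectangle (z.re + c * I) w ⊆ Rectangle z w := fun x hx ↦ by
      simp only [Rectangle, mem_reProdIm] at hx ⊢
      simp only [add_re, ofReal_re, re_ofReal_mul, I_re, mul_zero, add_zero, add_im, ofReal_im,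
        im_ofReal_mul, I_im, mul_one, zero_add] at hx
      exact ⟨hx.1, uIcc_subset_uIcc hc' right_mem_uIcc hx.2⟩
    rw [wedgeIntegral_add_wedgeIntegral_split (hf.mono hzw) hc',
      wedgeIntegral_add_wedgeIntegral_eq_zero_of_notMem_Ioo hf hd (lower.trans hzw) ?_,
      wedgeIntegral_add_wedgeIntegral_eq_zero_of_notMem_Ioo hf hd (upper.trans hzw) ?_, add_zero]
    -- the line `Im = c` carries a side of each half, so it misses their interiors
    · simpa using le_of_lt
    · simpa using le_of_lt
  · exact wedgeIntegral_add_wedgeIntegral_eq_zero_of_notMem_Ioo hf hd hzw hc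

end Complex

theorem isLittleO_one_add_abs_mul_log_pow_inv (a : ℝ) (p : ℕ) :
    (fun x : ℝ ↦ (1 + |a * Real.log x|) ^ p) =o[𝓝[>] 0] fun x ↦ x⁻¹ := by
  have hlog : Tendsto (fun x ↦ |Real.log x|) (𝓝[>] 0) atTop :=
    tendsto_abs_atBot_atTop.comp Real.tendsto_log_nhdsGT_zero
  have hO : (fun x ↦ 1 + |a * Real.log x|) =O[𝓝[>] 0] fun x ↦ |Real.log x| := by
    refine IsBigO.of_bound (1 + |a|) ?_
    filter_upwards [hlog.eventually_ge_atTop 1] with x hx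
    rw [Real.norm_eq_abs, Real.norm_eq_abs, abs_abs, abs_mul,
      abs_of_nonneg (by positivity : 0 ≤ 1 + |a| * |Real.log x|)]
    nlinarith [abs_nonneg a]
  refine (hO.pow p).trans_isLittleO ?_
  simpa [Real.rpow_natCast, Real.rpow_neg_one] using
    isLittleO_abs_log_rpow_rpow_nhdsGT_zero (p : ℝ) neg_one_lt_zero

namespace Function.Periodic

variable {h C : ℝ} {f : ℂ → ℂ} {p : ℕ}

theorem differentiable_cuspFunction (hh : h ≠ 0) (hper : Periodic f h) (hf : Differentiable ℂ f)
    (hbd : ∀ z, ‖f z‖ ≤ C * (1 + |z.im|) ^ p) :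
    Differentiable ℂ (cuspFunction h f) := by
  have hd : DifferentiableOn ℂ (cuspFunction h f) (univ \ {0}) := fun q hq ↦
    (qParam_right_inv hh hq.2 ▸
      differentiableAt_cuspFunction hh hper (hf _)).differentiableWithinAt
  have hO : cuspFunction h f =O[𝓝[≠] 0] fun q ↦ (1 + |-h / (2 * π) * Real.log ‖q‖|) ^ p := by
    refine IsBigO.of_bound C ?_
    filter_upwards [self_mem_nhdsWithin] with q hq
    rw [cuspFunction_eq_of_nonzero _ _ hq, Real.norm_of_nonneg (by positivity), ← im_invQParam]
    exact hbd _
  have ho : (fun q ↦ cuspFunction h f q - cuspFunction h f 0) =o[𝓝[≠] 0] fun q ↦ (q - 0)⁻¹ := by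
    simp only [sub_zero]
    refine IsLittleO.sub ?_ (isLittleO_const_left.2 (.inr tendsto_norm_inv_nhdsNE_zero_atTop))
    refine hO.trans_isLittleO <| ((isLittleO_one_add_abs_mul_log_pow_inv _ p).comp_tendsto
      tendsto_norm_nhdsNE_zero).trans_isBigO ?_
    simpa only [Function.comp_def, norm_inv] using (isBigO_refl (fun q : ℂ ↦ q⁻¹) _).norm_left
  have := differentiableOn_update_limUnder_of_isLittleO univ_mem hd ho
  rwa [← cuspFunction_zero_eq_limUnder_nhds_ne, update_eq_self, differentiableOn_univ] at this

theorem exists_norm_le_of_im_nonneg (hh : 0 < h) (hper : Periodic f h)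
    (hf : Differentiable ℂ f) (hbd : ∀ z, ‖f z‖ ≤ C * (1 + |z.im|) ^ p) :
    ∃ M, ∀ z, 0 ≤ z.im → ‖f z‖ ≤ M := by
  obtain ⟨M, hM⟩ := (isCompact_closedBall (0 : ℂ) 1).exists_bound_of_continuousOn
    (differentiable_cuspFunction hh.ne' hper hf hbd).continuous.continuousOn
  refine ⟨M, fun z hz ↦ ?_⟩
  rw [← eq_cuspFunction hh.ne' hper z]
  refine hM _ ?_
  rw [mem_closedBall_zero_iff, norm_qParam, Real.exp_le_one_iff]
  have := Real.pi_pos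
  exact div_nonpos_of_nonpos_of_nonneg (by nlinarith) hh.le

theorem apply_eq_apply_of_polynomial_growth (hh : 0 < h) (hper : Periodic f h)
    (hf : Differentiable ℂ f) (hbd : ∀ z, ‖f z‖ ≤ C * (1 + |z.im|) ^ p) (z w : ℂ) :
    f z = f w := by
  have hper' : Periodic (fun z ↦ f (-z)) h := fun z ↦ by simpa [neg_add_eq_sub] using hper.sub_eq (-z)
  obtain ⟨M₁, hM₁⟩ := exists_norm_le_of_im_nonneg hh hper hf hbd
  obtain ⟨M₂, hM₂⟩ := exists_norm_le_of_im_nonneg hh hper' (hf.comp differentiable_neg)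
    fun z ↦ by simpa using hbd (-z)
  refine hf.apply_eq_apply_of_bounded (isBounded_iff_forall_norm_le.2 ⟨max M₁ M₂, ?_⟩) z w
  rintro _ ⟨z, rfl⟩
  rcases le_total 0 z.im with hz | hz
  · exact (hM₁ z hz).trans (le_max_left ..)
  · simpa using (hM₂ (-z) (by simpa)).trans (le_max_right ..)

end Function.Periodic

noncomputable def stripExtension (F : ℂ → ℂ) (z : ℂ) : ℂ := F (z - ⌊z.im⌋ * I)

section StripExtension

variable {F : ℂ → ℂ} {z : ℂ}

theorem stripExtension_add_I (F : ℂ → ℂ) (z : ℂ) :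
    stripExtension F (z + I) = stripExtension F z := by
  simp only [stripExtension, add_im, I_im, Int.floor_add_one, Int.cast_add, Int.cast_one]
  ring_nf

theorem stripExtension_eq_sub (hper : ∀ t : ℝ, F (t + I) = F t) {n : ℤ} (h₀ : n ≤ z.im)
    (h₁ : z.im ≤ n + 1) : stripExtension F z = F (z - n * I) := by
  rcases h₁.lt_or_eq with h₁ | h₁
  · rw [stripExtension, Int.floor_eq_iff.2 ⟨h₀, h₁⟩]
  · have hre : z - ⌊z.im⌋ * I = z.re := by apply Complex.ext <;> simp [h₁]
    have hre' : z - n * I = z.re + I := by apply Complex.ext <;> simp [h₁]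
    rw [stripExtension, hre, hre', hper]

theorem stripExtension_eq (hper : ∀ t : ℝ, F (t + I) = F t) (h₀ : 0 ≤ z.im) (h₁ : z.im ≤ 1) :
    stripExtension F z = F z := by
  simpa using stripExtension_eq_sub hper (n := 0) (by simpa) (by simpa)

theorem norm_stripExtension_le {B : ℝ → ℝ}
    (hbd : ∀ z : ℂ, 0 ≤ z.im → z.im ≤ 1 → ‖F z‖ ≤ B z.re) (z : ℂ) :
    ‖stripExtension F z‖ ≤ B z.re := by
  simpa [stripExtension] using
    hbd (z - ⌊z.im⌋ * I) (by simp [Int.fract_nonneg]) (by simp [(Int.fract_lt_one _).le])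

theorem continuous_stripExtension (hcont : ContinuousOn F (im ⁻¹' Icc 0 1))
    (hper : ∀ t : ℝ, F (t + I) = F t) : Continuous (stripExtension F) := by
  have hstrip : ∀ n : ℤ, ContinuousOn (stripExtension F) (im ⁻¹' Icc n (n + 1)) := fun n ↦
    (hcont.comp (by fun_prop : Continuous fun z : ℂ ↦ z - n * I).continuousOn
      fun z hz ↦ by simp; constructor <;> linarith [hz.1, hz.2]).congr
      fun z hz ↦ stripExtension_eq_sub hper hz.1 hz.2
  refine continuous_iff_continuousAt.2 fun z ↦ ?_
  set n := ⌊z.im⌋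
  have hclosed : ∀ m : ℤ, IsClosed (im ⁻¹' Icc (m : ℝ) (m + 1)) := fun m ↦
    isClosed_Icc.preimage continuous_im
  refine ((hstrip (n - 1)).union_of_isClosed (hstrip n) (hclosed _) (hclosed _)).continuousAt ?_
  refine mem_of_superset ((isOpen_Ioo.preimage continuous_im).mem_nhds
    (show z.im ∈ Ioo ((n : ℝ) - 1) (n + 1) from ?_)) fun w hw ↦ ?_
  · exact ⟨by linarith [Int.floor_le z.im], Int.lt_floor_add_one _⟩
  · rcases le_total w.im n with h | h
    · exact .inl ⟨by push_cast; linarith [hw.1], by push_cast; linarith⟩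
    · exact .inr ⟨h, hw.2.le⟩

theorem differentiableAt_stripExtension (hdiff : DifferentiableOn ℂ F (im ⁻¹' Ioo 0 1))
    (hper : ∀ t : ℝ, F (t + I) = F t) {n : ℤ} (hz : z.im ∈ Ioo (n : ℝ) (n + 1)) :
    DifferentiableAt ℂ (stripExtension F) z := by
  have hstrip : stripExtension F =ᶠ[𝓝 z] fun w ↦ F (w - n * I) :=
    eventually_of_mem ((isOpen_Ioo.preimage continuous_im).mem_nhds hz)
      fun w hw ↦ stripExtension_eq_sub hper hw.1.le hw.2.le
  refine DifferentiableAt.congr_of_eventuallyEq ?_ hstrip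
  refine (hdiff.differentiableAt ((isOpen_Ioo.preimage continuous_im).mem_nhds ?_)).comp z
    (by fun_prop)
  simpa using ⟨hz.1, by linarith [hz.2]⟩

theorem differentiable_stripExtension (hcont : ContinuousOn F (im ⁻¹' Icc 0 1))
    (hdiff : DifferentiableOn ℂ F (im ⁻¹' Ioo 0 1)) (hper : ∀ t : ℝ, F (t + I) = F t) :
    Differentiable ℂ (stripExtension F) := fun z ↦ by
  set n := ⌊z.im⌋
  have hU : IsOpen (im ⁻¹' Ioo ((n : ℝ) - 1) (n + 1)) := isOpen_Ioo.preimage continuous_im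
  have hz : z ∈ im ⁻¹' Ioo ((n : ℝ) - 1) (n + 1) :=
    ⟨by linarith [Int.floor_le z.im], Int.lt_floor_add_one _⟩
  refine ((differentiableOn_of_differentiableOn_diff_im_preimage (c := n) hU
    (continuous_stripExtension hcont hper).continuousOn ?_) z hz).differentiableAt (hU.mem_nhds hz)
  rintro w ⟨⟨hw₁, hw₂⟩, hwn⟩
  rcases lt_or_gt_of_ne hwn with hw | hw
  · exact (differentiableAt_stripExtension hdiff hper (n := n - 1)
      ⟨by push_cast; linarith, by push_cast; linarith⟩).differentiableWithinAt
  · exact (differentiableAt_stripExtension hdiff hper ⟨hw, hw₂⟩).differentiableWithinAt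

end StripExtension

theorem strip_constant_of_periodic_of_polynomial_growth_general
    (F : ℂ → ℂ)
    (hcont : ContinuousOn F {z : ℂ | 0 ≤ z.im ∧ z.im ≤ 1})
    (hdiff : DifferentiableOn ℂ F {z : ℂ | 0 < z.im ∧ z.im < 1})
    (hper : ∀ t : ℝ, F ((t : ℂ) + Complex.I) = F (t : ℂ))
    (C : ℝ) (p : ℕ)
    (hbd : ∀ z : ℂ, 0 ≤ z.im → z.im ≤ 1 → ‖F z‖ ≤ C * (1 + |z.re|) ^ p) :
    ∀ z w : ℂ, 0 ≤ z.im → z.im ≤ 1 → 0 ≤ w.im → w.im ≤ 1 → F z = F w := by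
  intro z w hz₀ hz₁ hw₀ hw₁
  set g : ℂ → ℂ := fun ζ ↦ stripExtension F (ζ * I)
  have hg_periodic : Function.Periodic g 1 := fun ζ ↦ by
    simp only [g, add_one_mul, stripExtension_add_I]
  have hg_diff : Differentiable ℂ g :=
    (differentiable_stripExtension hcont hdiff hper).comp (differentiable_id.mul_const I)
  have hg_bd : ∀ ζ, ‖g ζ‖ ≤ C * (1 + |ζ.im|) ^ p := fun ζ ↦ by
    simpa [g] using norm_stripExtension_le (B := fun x ↦ C * (1 + |x|) ^ p) hbd (ζ * I)
  have hg : ∀ ζ, g (-ζ * I) = stripExtension F ζ := fun ζ ↦ by simp [g, mul_assoc]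
  rw [← stripExtension_eq hper hz₀ hz₁, ← stripExtension_eq hper hw₀ hw₁, ← hg, ← hg,
    hg_periodic.apply_eq_apply_of_polynomial_growth one_pos hg_diff hg_bd]

/-- Liouville-type theorem on the closed strip `𝒯¹ = {z ∈ ℂ : 0 ≤ Im z ≤ 1}`:
if `F` is continuous on `𝒯¹`, holomorphic on its interior, satisfies the
`i`-periodic boundary condition `F(t + i) = F(t)` for all real `t`, and grows
at most polynomially in `Re z` on the strip, then `F` is constant on `𝒯¹`. -/
theorem strip_constant_of_periodic_of_polynomial_growth
    (F : ℂ → ℂ)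
    (hcont : ContinuousOn F {z : ℂ | 0 ≤ z.im ∧ z.im ≤ 1})
    (hdiff : DifferentiableOn ℂ F {z : ℂ | 0 < z.im ∧ z.im < 1})
    (hper : ∀ t : ℝ, F ((t : ℂ) + Complex.I) = F (t : ℂ))
    (C : ℝ) (hC : 0 < C) (p : ℕ)
    (hbd : ∀ z : ℂ, 0 ≤ z.im → z.im ≤ 1 → ‖F z‖ ≤ C * (1 + |z.re|) ^ p) :
    ∀ z w : ℂ, 0 ≤ z.im → z.im ≤ 1 → 0 ≤ w.im → w.im ≤ 1 → F z = F w :=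
  strip_constant_of_periodic_of_polynomial_growth_general F hcont hdiff hper C p hbd
end

section
/- Let (G_n) be a sequence of functions ℂ → ℂ such that each G_n is continuous on the closed strip 𝒯¹, holomorphic on its interior, and bounded on 𝒯¹. If the sequence (G_n) is uniformly Cauchy on the boundary ℝ ∪ (ℝ + i) of the strip, then (G_n) converges uniformly on all of 𝒯¹, and the limit function G is continuous on 𝒯¹ and holomorphic on the interior of 𝒯¹. -/
open Complex Set Filter Topology

/-!
A bounded holomorphic function on a horizontal strip is dominated by its supremum on the boundary
(Phragmén–Lindelöf, the growth condition being trivially met). Applied to the differences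
`G m - G n`, this transports the uniform Cauchy property from the boundary to the whole closed
strip; the uniform limit then exists by completeness of `ℂ` and inherits continuity and, by
Weierstrass' theorem, holomorphy.
-/

theorem UniformCauchySeqOn.exists_tendstoUniformlyOn {ι α β : Type*} [UniformSpace β]
    [CompleteSpace β] [Nonempty β] {F : ι → α → β} {p : Filter ι} [p.NeBot] {s : Set α}
    (hF : UniformCauchySeqOn F p s) : ∃ f : α → β, TendstoUniformlyOn F f p s :=
  ⟨fun x ↦ lim (p.map (F · x)),
    hF.tendstoUniformlyOn_of_tendsto fun _ hx ↦ (hF.cauchy_map hx).le_nhds_lim⟩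

section HorizontalStrip

variable {E : Type*} [NormedAddCommGroup E] [NormedSpace ℂ E] {a b : ℝ}

theorem norm_le_on_horizontal_strip_of_bounded {f : ℂ → E} {C M : ℝ}
    (hcont : ContinuousOn f (im ⁻¹' Icc a b))
    (hdiff : DifferentiableOn ℂ f (im ⁻¹' Ioo a b))
    (hbdd : ∀ z ∈ im ⁻¹' Icc a b, ‖f z‖ ≤ M)
    (hboundary : ∀ z ∈ im ⁻¹' {a, b}, ‖f z‖ ≤ C)
    {z : ℂ} (hz : z ∈ im ⁻¹' Icc a b) : ‖f z‖ ≤ C := by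
  have hclosure : closure (im ⁻¹' Ioo a b) ⊆ im ⁻¹' Icc a b :=
    (isClosed_Icc.preimage continuous_im).closure_subset_iff.2 (preimage_mono Ioo_subset_Icc_self)
  -- With `B = 0` the comparison function is `1`, so any `c < π / (b - a)` will do.
  have hgrowth : f =O[comap (_root_.abs ∘ re) atTop ⊓ 𝓟 (im ⁻¹' Ioo a b)]
      fun z ↦ Real.exp (0 * Real.exp ((Real.pi / (b - a) - 1) * |z.re|)) := by
    simp only [zero_mul, Real.exp_zero]
    exact (Asymptotics.isBigO_one_iff ℝ).2 ⟨M, eventually_map.2 <| eventually_inf_principal.2 <|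
      .of_forall fun w hw => hbdd w (Ioo_subset_Icc_self hw)⟩
  exact PhragmenLindelof.horizontal_strip ⟨hdiff, hcont.mono hclosure⟩
    ⟨_, sub_one_lt _, 0, hgrowth⟩ (fun w hw => hboundary w (.inl hw))
    (fun w hw => hboundary w (.inr hw)) hz.1 hz.2

theorem UniformCauchySeqOn.horizontal_strip_of_boundary {ι : Type*} {p : Filter ι}
    {F : ι → ℂ → E}
    (hcont : ∀ i, ContinuousOn (F i) (im ⁻¹' Icc a b))
    (hdiff : ∀ i, DifferentiableOn ℂ (F i) (im ⁻¹' Ioo a b))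
    (hbdd : ∀ i, ∃ M, ∀ z ∈ im ⁻¹' Icc a b, ‖F i z‖ ≤ M)
    (hF : UniformCauchySeqOn F p (im ⁻¹' {a, b})) :
    UniformCauchySeqOn F p (im ⁻¹' Icc a b) := by
  intro u hu
  obtain ⟨ε, hε, hεu⟩ := Metric.mem_uniformity_dist.1 hu
  filter_upwards [hF _ (Metric.dist_mem_uniformity (half_pos hε))] with ij hij z hz
  obtain ⟨M₁, hM₁⟩ := hbdd ij.1
  obtain ⟨M₂, hM₂⟩ := hbdd ij.2
  have hdist : dist (F ij.1 z) (F ij.2 z) ≤ ε / 2 := by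
    rw [dist_eq_norm]
    refine norm_le_on_horizontal_strip_of_bounded ((hcont _).sub (hcont _))
      ((hdiff _).sub (hdiff _)) (M := M₁ + M₂) (fun w hw => ?_)
      (fun w hw => by simpa only [Pi.sub_apply, dist_eq_norm] using (hij w hw).le) hz
    exact (norm_sub_le _ _).trans (add_le_add (hM₁ w hw) (hM₂ w hw))
  exact hεu (hdist.trans_lt (half_lt_self hε))

end HorizontalStrip

/-- Phragmén–Lindelöf plus Weierstrass convergence on the closed strip
`𝒯¹ = {z ∈ ℂ : 0 ≤ Im z ≤ 1}`: if a sequence of functions, each continuous on `𝒯¹`,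
holomorphic on its interior and bounded on `𝒯¹`, is uniformly Cauchy on the boundary
`ℝ ∪ (ℝ + i)`, then it converges uniformly on all of `𝒯¹` to a function which is
continuous on `𝒯¹` and holomorphic on the interior of `𝒯¹`. -/
theorem strip_uniform_limit_of_uniformCauchy_on_boundary
    (G : ℕ → ℂ → ℂ)
    (hcont : ∀ n, ContinuousOn (G n) {z : ℂ | 0 ≤ z.im ∧ z.im ≤ 1})
    (hdiff : ∀ n, DifferentiableOn ℂ (G n) {z : ℂ | 0 < z.im ∧ z.im < 1})
    (hbdd : ∀ n, ∃ M : ℝ, ∀ z ∈ {z : ℂ | 0 ≤ z.im ∧ z.im ≤ 1}, ‖G n z‖ ≤ M)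
    (hcauchy : UniformCauchySeqOn G atTop {z : ℂ | z.im = 0 ∨ z.im = 1}) :
    ∃ g : ℂ → ℂ,
      TendstoUniformlyOn G g atTop {z : ℂ | 0 ≤ z.im ∧ z.im ≤ 1} ∧
      ContinuousOn g {z : ℂ | 0 ≤ z.im ∧ z.im ≤ 1} ∧
      DifferentiableOn ℂ g {z : ℂ | 0 < z.im ∧ z.im < 1} := by
  have hstrip : UniformCauchySeqOn G atTop (im ⁻¹' Icc 0 1) :=
    UniformCauchySeqOn.horizontal_strip_of_boundary hcont hdiff hbdd hcauchy
  obtain ⟨g, hg⟩ := hstrip.exists_tendstoUniformlyOn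
  have hlocal : TendstoLocallyUniformlyOn G g atTop (im ⁻¹' Ioo 0 1) :=
    hg.tendstoLocallyUniformlyOn.mono fun z hz => ⟨hz.1.le, hz.2.le⟩
  exact ⟨g, hg, hg.continuousOn (.of_forall hcont),
    hlocal.differentiableOn (.of_forall hdiff) (isOpen_Ioo.preimage continuous_im)⟩
end

section
/- For all Schwartz functions f, g ∈ 𝒮(ℝ, ℂ), the principal-value limit θ(f, g) = lim_{ε→0⁺} ( ∫_{−∞}^{−ε} + ∫_{ε}^{∞} ) (1 − e^{−p})^{−1} conj(f̂(p)) ĝ(p) dp exists in ℂ. -/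
/-!
Write `F = conj f̂ · ĝ`, an integrable `C¹` function, and `k p = (1 - e^{-p})⁻¹`. Folding the
truncated integral onto `(ε, ∞)` gives `∫_{p > ε} (k p F p + k (-p) F (-p)) dp`. Since
`k (-p) = 1 - k p`, the integrand equals `k p (F p - F (-p)) + F (-p)`; the simple pole
`k p ~ 1/p` is cancelled by `F p - F (-p) = O(p)`, so the integrand is integrable on `(0, ∞)`
and the truncated integrals converge as `ε → 0⁺`.
-/

open MeasureTheory Filter

/-- The Fourier transform `f̂(p) = (2π)^{-1/2} ∫ e^{-ipx} f(x) dx`. -/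
noncomputable def fourierHat (f : ℝ → ℂ) (p : ℝ) : ℂ :=
  ((Real.sqrt (2 * Real.pi) : ℂ))⁻¹ *
    ∫ x : ℝ, Complex.exp (-Complex.I * (p : ℂ) * (x : ℂ)) * f x

open Set Topology FourierTransform

noncomputable def kmsKernel (p : ℝ) : ℝ := (1 - Real.exp (-p))⁻¹

lemma measurable_kmsKernel : Measurable kmsKernel := by
  unfold kmsKernel; fun_prop

lemma kmsKernel_eq {p : ℝ} (hp : p ≠ 0) : kmsKernel p = 1 + (Real.exp p - 1)⁻¹ := by
  have h : Real.exp p - 1 ≠ 0 := by rwa [sub_ne_zero, Ne, Real.exp_eq_one_iff]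
  rw [kmsKernel, Real.exp_neg]
  field_simp
  ring

lemma kmsKernel_neg {p : ℝ} (hp : p ≠ 0) : kmsKernel (-p) = 1 - kmsKernel p := by
  rw [kmsKernel_eq (neg_ne_zero.2 hp), kmsKernel, ← neg_sub, inv_neg]; ring

lemma kmsKernel_pos {p : ℝ} (hp : 0 < p) : 0 < kmsKernel p :=
  inv_pos.2 (sub_pos.2 (Real.exp_lt_one_iff.2 (neg_lt_zero.2 hp)))

lemma kmsKernel_le {p : ℝ} (hp : 0 < p) : kmsKernel p ≤ 1 + p⁻¹ := by
  rw [kmsKernel_eq hp.ne']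
  gcongr
  linarith [Real.add_one_le_exp p]

lemma abs_kmsKernel_le (p : ℝ) : |kmsKernel p| ≤ 1 + |p|⁻¹ := by
  rcases lt_trichotomy p 0 with hp | rfl | hp
  · have h₁ := kmsKernel_pos (neg_pos.2 hp)
    have h₂ := kmsKernel_le (neg_pos.2 hp)
    rw [kmsKernel_neg hp.ne] at h₁ h₂
    rw [abs_of_neg hp, abs_le]
    constructor <;> linarith [inv_pos.2 (neg_pos.2 hp)]
  · simp [kmsKernel]
  · rw [abs_of_pos hp, abs_of_pos (kmsKernel_pos hp)]
    exact kmsKernel_le hp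

variable {E : Type*} [NormedAddCommGroup E] [NormedSpace ℝ E]

lemma continuous_setIntegral_Ioi {f : ℝ → E} (hf : Integrable f) :
    Continuous fun a => ∫ x in Ioi a, f x := by
  have h : (fun a => ∫ x in Ioi a, f x) = fun a => (∫ x in Ioi 0, f x) - ∫ x in 0..a, f x :=
    funext fun a => by
      rw [← intervalIntegral.integral_Ioi_sub_Ioi' hf.integrableOn hf.integrableOn, sub_sub_cancel]
  rw [h]
  exact continuous_const.sub
    (intervalIntegral.continuous_primitive (fun _ _ => hf.intervalIntegrable) 0)

lemma tendsto_setIntegral_Ioi_nhdsGT {f : ℝ → E} {a : ℝ} (hf : IntegrableOn f (Ioi a)) :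
    Tendsto (fun ε => ∫ x in Ioi ε, f x) (𝓝[>] a) (𝓝 (∫ x in Ioi a, f x)) := by
  have hcont := continuous_setIntegral_Ioi ((integrable_indicator_iff measurableSet_Ioi).2 hf)
  have key : ∀ ε ≥ a, ∫ x in Ioi ε, (Ioi a).indicator f x = ∫ x in Ioi ε, f x := fun ε hε => by
    rw [setIntegral_indicator measurableSet_Ioi, Ioi_inter_Ioi, sup_eq_left.2 hε]
  rw [← key a le_rfl]
  refine (hcont.tendsto a).mono_left nhdsWithin_le_nhds |>.congr' ?_
  filter_upwards [self_mem_nhdsWithin] with ε hε using key ε (le_of_lt hε)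

lemma setIntegral_le_abs_eq_setIntegral_Ioi {G : ℝ → E} {ε : ℝ} (hε : 0 < ε)
    (hG : IntegrableOn G {p | ε ≤ |p|}) :
    ∫ p in {p | ε ≤ |p|}, G p = ∫ p in Ioi ε, (G p + G (-p)) := by
  have hset : {p : ℝ | ε ≤ |p|} = Iic (-ε) ∪ Ici ε := by
    ext p; simp only [mem_ofPred_eq, mem_union, mem_Iic, mem_Ici, le_abs, le_neg]; tauto
  rw [hset] at hG ⊢
  have hneg : IntegrableOn G (Iic (-ε)) := hG.mono_set subset_union_left
  have hpos : IntegrableOn G (Ici ε) := hG.mono_set subset_union_right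
  rw [setIntegral_union (Iic_disjoint_Ici.2 (by linarith)) measurableSet_Ici hneg hpos,
    ← integral_comp_neg_Ioi, integral_Ici_eq_integral_Ioi,
    integral_add (hpos.mono_set Ioi_subset_Ici_self)
      (hneg.comp_neg_Ici.mono_set Ioi_subset_Ici_self), add_comm]

lemma integrableOn_kmsKernel_smul {F : ℝ → E} (hF : Integrable F) {ε : ℝ} (hε : 0 < ε) :
    IntegrableOn (fun p => kmsKernel p • F p) {p | ε ≤ |p|} := by
  refine hF.integrableOn.bdd_smul (1 + ε⁻¹) measurable_kmsKernel.aestronglyMeasurable ?_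
  refine ae_restrict_of_forall_mem (measurableSet_le measurable_const measurable_abs) fun p hp => ?_
  calc ‖kmsKernel p‖ ≤ 1 + |p|⁻¹ := abs_kmsKernel_le p
    _ ≤ 1 + ε⁻¹ := by gcongr; exact hp

lemma norm_kmsKernel_smul_sub_comp_neg_le {F : ℝ → E} {K : NNReal}
    (hK : LipschitzOnWith K F (Icc (-1) 1)) {p : ℝ} (hp : p ∈ Ioc 0 1) :
    ‖kmsKernel p • (F p - F (-p))‖ ≤ 4 * K := by
  obtain ⟨hp₀, hp₁⟩ := hp
  have hlip : ‖F p - F (-p)‖ ≤ K * (2 * p) := by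
    have hmem : p ∈ Icc (-1 : ℝ) 1 := ⟨by linarith, hp₁⟩
    have hmem' : -p ∈ Icc (-1 : ℝ) 1 := ⟨by linarith, by linarith⟩
    have := hK.norm_sub_le hmem hmem'
    rwa [sub_neg_eq_add, ← two_mul, Real.norm_of_nonneg (by linarith)] at this
  calc ‖kmsKernel p • (F p - F (-p))‖ ≤ (1 + p⁻¹) * (K * (2 * p)) := by
        rw [norm_smul]
        exact mul_le_mul (by simpa [abs_of_pos hp₀] using abs_kmsKernel_le p) hlip
          (norm_nonneg _) (by positivity)
    _ = 2 * K * (p + 1) := by field_simp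
    _ ≤ 4 * K := by nlinarith [K.2]

lemma integrableOn_Ioi_kmsKernel_symm {F : ℝ → E} (hF : Integrable F) (hF' : ContDiff ℝ 1 F) :
    IntegrableOn (fun p => kmsKernel p • F p + kmsKernel (-p) • F (-p)) (Ioi 0) := by
  rw [← Ioc_union_Ioi_eq_Ioi zero_le_one]
  refine IntegrableOn.union ?_ ?_
  · obtain ⟨K, hK⟩ := hF'.contDiffOn.exists_lipschitzOnWith one_ne_zero (convex_Icc (-1 : ℝ) 1)
      isCompact_Icc
    have heq : EqOn (fun p => kmsKernel p • (F p - F (-p)) + F (-p))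
        (fun p => kmsKernel p • F p + kmsKernel (-p) • F (-p)) (Ioc 0 1) := fun p hp => by
      simp only [kmsKernel_neg hp.1.ne', smul_sub, sub_smul, one_smul]
      abel
    refine IntegrableOn.congr_fun ?_ heq measurableSet_Ioc
    refine IntegrableOn.add ?_ hF.comp_neg.integrableOn
    refine Measure.integrableOn_of_bounded (M := 4 * K) measure_Ioc_lt_top.ne
      (measurable_kmsKernel.aestronglyMeasurable.smul
        (hF.aestronglyMeasurable.sub hF.comp_neg.aestronglyMeasurable)) ?_
    exact ae_restrict_of_forall_mem measurableSet_Ioc fun p hp =>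
      norm_kmsKernel_smul_sub_comp_neg_le hK hp
  · have h := integrableOn_kmsKernel_smul hF one_pos
    have hpos : Ioi (1 : ℝ) ⊆ {p | 1 ≤ |p|} := fun p hp =>
      show (1 : ℝ) ≤ |p| from le_abs.2 (Or.inl (le_of_lt hp))
    have hneg : Iic (-1 : ℝ) ⊆ {p | 1 ≤ |p|} := fun p hp =>
      show (1 : ℝ) ≤ |p| from le_abs.2 (Or.inr (le_neg.1 hp))
    exact (h.mono_set hpos).add ((h.mono_set hneg).comp_neg_Ici.mono_set Ioi_subset_Ici_self)

theorem tendsto_setIntegral_kmsKernel_smul {F : ℝ → E} (hF : Integrable F)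
    (hF' : ContDiff ℝ 1 F) :
    Tendsto (fun ε => ∫ p in {p | ε ≤ |p|}, kmsKernel p • F p) (𝓝[>] 0)
      (𝓝 (∫ p in Ioi 0, (kmsKernel p • F p + kmsKernel (-p) • F (-p)))) := by
  refine (tendsto_setIntegral_Ioi_nhdsGT (integrableOn_Ioi_kmsKernel_symm hF hF')).congr' ?_
  filter_upwards [self_mem_nhdsWithin] with ε hε
  exact (setIntegral_le_abs_eq_setIntegral_Ioi hε (integrableOn_kmsKernel_smul hF hε)).symm

open Real in
lemma fourierHat_eq (f : SchwartzMap ℝ ℂ) :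
    fourierHat ⇑f = fun p => (√(2 * π) : ℂ)⁻¹ * 𝓕 f (p / (2 * π)) := by
  ext p
  rw [fourierHat, SchwartzMap.fourier_coe, Real.fourier_real_eq_integral_exp_smul]
  congr 1
  refine integral_congr_ae (Eventually.of_forall fun x => ?_)
  simp only [smul_eq_mul]
  congr 2
  push_cast
  field_simp

lemma contDiff_fourierHat (f : SchwartzMap ℝ ℂ) {n : ℕ∞} : ContDiff ℝ n (fourierHat ⇑f) := by
  rw [fourierHat_eq]
  have := (𝓕 f).smooth n
  fun_prop

lemma integrable_fourierHat (f : SchwartzMap ℝ ℂ) : Integrable (fourierHat ⇑f) := by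
  rw [fourierHat_eq]
  exact ((𝓕 f).integrable.comp_div (by positivity)).const_mul _

lemma exists_norm_fourierHat_le (f : SchwartzMap ℝ ℂ) : ∃ C, ∀ p, ‖fourierHat (⇑f) p‖ ≤ C := by
  refine ⟨‖(√(2 * Real.pi) : ℂ)⁻¹‖ * SchwartzMap.seminorm ℝ 0 0 (𝓕 f), fun p => ?_⟩
  rw [fourierHat_eq, norm_mul]
  gcongr
  exact SchwartzMap.norm_le_seminorm ℝ _ _

lemma integrable_conj_fourierHat_mul (f g : SchwartzMap ℝ ℂ) :
    Integrable fun p => starRingEnd ℂ (fourierHat (⇑f) p) * fourierHat (⇑g) p := by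
  obtain ⟨C, hC⟩ := exists_norm_fourierHat_le f
  refine (integrable_fourierHat g).bdd_mul (c := C) ?_ (Eventually.of_forall fun p => ?_)
  · exact (Complex.continuous_conj.comp
      (contDiff_fourierHat f (n := 0)).continuous).aestronglyMeasurable
  · rw [RCLike.norm_conj]; exact hC p

lemma contDiff_conj_fourierHat_mul (f g : SchwartzMap ℝ ℂ) {n : ℕ∞} :
    ContDiff ℝ n fun p => starRingEnd ℂ (fourierHat (⇑f) p) * fourierHat (⇑g) p :=
  (Complex.conjCLE.contDiff.comp (contDiff_fourierHat f)).mul (contDiff_fourierHat g)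

/-- For Schwartz functions `f, g`, the principal-value limit
`θ(f,g) = lim_{ε→0⁺} ∫_{|p|≥ε} (1 - e^{-p})⁻¹ conj(f̂(p)) ĝ(p) dp` exists in `ℂ`. -/
theorem pv_twoPoint_exists (f g : SchwartzMap ℝ ℂ) :
    ∃ L : ℂ, Tendsto
      (fun ε : ℝ => ∫ p in {p : ℝ | ε ≤ |p|},
        ((1 - Real.exp (-p) : ℝ) : ℂ)⁻¹ * (starRingEnd ℂ) (fourierHat (⇑f) p)
          * fourierHat (⇑g) p)
      (nhdsWithin (0 : ℝ) (Set.Ioi 0)) (nhds L) := by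
  refine ⟨_, (tendsto_setIntegral_kmsKernel_smul (integrable_conj_fourierHat_mul f g)
    (contDiff_conj_fourierHat_mul f g)).congr fun ε => ?_⟩
  simp only [kmsKernel, Complex.real_smul, Complex.ofReal_inv, mul_assoc]
end

section
/- For all Schwartz functions f, g ∈ 𝒮(ℝ, ℂ), the function ℝ → ℂ, t ↦ θ(f, g(·+t)), is differentiable on ℝ, and its derivative at every t ∈ ℝ equals θ(f, g′(·+t)), where g′ is the derivative of g and g(·+t) denotes the translate x ↦ g(x + t). -/
/-!
With `w(p) = (1 - e^{-p})⁻¹` one has `w(-p) = 1 - w(p)`, so folding the principal-value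
integral `∫_{|p| ≥ ε} w φ` onto `p > ε` gives `∫_{p > ε} (w(p) (φ(p) - φ(-p)) + φ(-p)) dp`.
When `φ(p) - φ(-p) = O(p)` the simple pole of `w` at `0` is cancelled, the folded integrand is
integrable on `(0, ∞)`, and the principal value is its integral. For the pair `f, g(· + s)` the
integrand is `φ = e^{ips} conj(f̂) ĝ` with `conj(f̂) ĝ` a Schwartz function; its `s`-derivative
`ip e^{ips} conj(f̂) ĝ`, which is the integrand for the pair `f, g′(· + s)`, gives a folded
integrand dominated by `2 (1 + |p|) (|conj(f̂) ĝ|(p) + |conj(f̂) ĝ|(-p))` uniformly in `s`, so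
one may differentiate under the integral sign.
-/

open MeasureTheory Filter

/-- The principal-value two-point function
`θ(f,g) = lim_{ε→0⁺} ∫_{|p|≥ε} (1 - e^{-p})⁻¹ conj(f̂(p)) ĝ(p) dp`. -/
noncomputable def twoPoint (f g : ℝ → ℂ) : ℂ :=
  limUnder (nhdsWithin (0 : ℝ) (Set.Ioi 0))
    (fun ε : ℝ => ∫ p in {p : ℝ | ε ≤ |p|},
      ((1 - Real.exp (-p) : ℝ) : ℂ)⁻¹ * (starRingEnd ℂ) (fourierHat f p) * fourierHat g p)

open Complex Set Topology
open scoped SchwartzMap FourierTransform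

noncomputable def kmsWeight (p : ℝ) : ℂ := ((1 - Real.exp (-p) : ℝ) : ℂ)⁻¹

noncomputable def kmsFold (φ : ℝ → ℂ) (p : ℝ) : ℂ := kmsWeight p * (φ p - φ (-p)) + φ (-p)

lemma kmsWeight_neg {p : ℝ} (hp : p ≠ 0) : kmsWeight (-p) = 1 - kmsWeight p := by
  have h₁ : 1 - Real.exp (-p) ≠ 0 := by
    rw [sub_ne_zero, ne_comm, Ne, Real.exp_eq_one_iff]; exact neg_ne_zero.mpr hp
  have h₂ : 1 - Real.exp p ≠ 0 := by
    rw [sub_ne_zero, ne_comm, Ne, Real.exp_eq_one_iff]; exact hp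
  have key : (1 - Real.exp p)⁻¹ = 1 - (1 - Real.exp (-p))⁻¹ := by
    have h : Real.exp (-p) * Real.exp p = 1 := by rw [← Real.exp_add]; simp
    field_simp
    linear_combination -h
  simp only [kmsWeight, neg_neg]
  exact_mod_cast congrArg ((↑) : ℝ → ℂ) key

lemma norm_kmsWeight (p : ℝ) : ‖kmsWeight p‖ = |1 - Real.exp (-p)|⁻¹ := by
  rw [kmsWeight, norm_inv, Complex.norm_real, Real.norm_eq_abs]

lemma one_sub_exp_neg_pos {p : ℝ} (hp : 0 < p) : 0 < 1 - Real.exp (-p) := by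
  simpa using Real.exp_lt_one_iff.mpr (neg_lt_zero.mpr hp)

lemma norm_kmsWeight_mul_le {p : ℝ} (hp : 0 < p) : ‖kmsWeight p‖ * p ≤ 1 + p := by
  have hpos := one_sub_exp_neg_pos hp
  rw [norm_kmsWeight, abs_of_pos hpos, inv_mul_le_iff₀ hpos]
  have h : Real.exp (-p) * Real.exp p = 1 := by rw [← Real.exp_add]; simp
  nlinarith [Real.add_one_le_exp p, Real.exp_pos (-p)]

lemma norm_kmsWeight_le {ε p : ℝ} (hε : 0 < ε) (hp : ε ≤ |p|) :
    ‖kmsWeight p‖ ≤ (1 - Real.exp (-ε))⁻¹ := by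
  rw [norm_kmsWeight]
  refine inv_anti₀ (one_sub_exp_neg_pos hε) ?_
  rcases le_or_gt 0 p with h | h
  · rw [abs_of_nonneg h] at hp
    linarith [le_abs_self (1 - Real.exp (-p)), Real.exp_le_exp.mpr (neg_le_neg hp)]
  · rw [abs_of_neg h] at hp
    linarith [neg_abs_le (1 - Real.exp (-p)), Real.exp_le_exp.mpr hp,
      Real.add_one_le_exp ε, Real.add_one_le_exp (-ε)]

lemma measurable_kmsWeight : Measurable kmsWeight := by
  unfold kmsWeight; fun_prop

section Fold

variable {φ : ℝ → ℂ} {C K ε : ℝ}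

lemma kmsFold_eq {p : ℝ} (hp : p ≠ 0) :
    kmsWeight p * φ p + kmsWeight (-p) * φ (-p) = kmsFold φ p := by
  rw [kmsFold, kmsWeight_neg hp]; ring

lemma norm_kmsFold_le (p : ℝ) :
    ‖kmsFold φ p‖ ≤ ‖kmsWeight p‖ * ‖φ p - φ (-p)‖ + ‖φ (-p)‖ :=
  (norm_add_le _ _).trans_eq (by rw [norm_mul])

lemma measurable_kmsFold (hφ : Measurable φ) : Measurable (kmsFold φ) :=
  (measurable_kmsWeight.mul (hφ.sub (hφ.comp measurable_neg))).add (hφ.comp measurable_neg)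

lemma integrableOn_kmsFold (hm : Measurable φ) (hi : Integrable φ)
    (hb : ∀ p, ‖φ p‖ ≤ C) (hodd : ∀ p, ‖φ p - φ (-p)‖ ≤ K * |p|) :
    IntegrableOn (kmsFold φ) (Ioi 0) := by
  have hK : 0 ≤ K := by simpa using (norm_nonneg _).trans (hodd 1)
  rw [← Ioc_union_Ioi_eq_Ioi zero_le_one]
  refine IntegrableOn.union ?_ ?_
  · refine Measure.integrableOn_of_bounded (M := 2 * K + C) measure_Ioc_lt_top.ne
      (measurable_kmsFold hm).aestronglyMeasurable ?_
    filter_upwards [ae_restrict_mem measurableSet_Ioc] with p ⟨hp₀, hp₁⟩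
    calc ‖kmsFold φ p‖ ≤ ‖kmsWeight p‖ * (K * p) + C := by
          refine (norm_kmsFold_le p).trans (add_le_add ?_ (hb _))
          gcongr
          simpa [abs_of_pos hp₀] using hodd p
      _ = K * (‖kmsWeight p‖ * p) + C := by ring
      _ ≤ K * (1 + p) + C := by gcongr; exact norm_kmsWeight_mul_le hp₀
      _ ≤ 2 * K + C := by nlinarith
  · set c := (1 - Real.exp (-1))⁻¹
    have hc : 0 ≤ c := inv_nonneg.mpr (one_sub_exp_neg_pos one_pos).le
    refine Integrable.mono' ((hi.norm.add hi.comp_neg.norm).const_mul (c + 1)).integrableOn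
      (measurable_kmsFold hm).aestronglyMeasurable ?_
    filter_upwards [ae_restrict_mem measurableSet_Ioi] with p hp
    have hw : ‖kmsWeight p‖ ≤ c := norm_kmsWeight_le one_pos (hp.le.trans (le_abs_self p))
    calc ‖kmsFold φ p‖ ≤ c * (‖φ p‖ + ‖φ (-p)‖) + ‖φ (-p)‖ := by
          refine (norm_kmsFold_le p).trans (add_le_add_left ?_ _)
          exact mul_le_mul hw (norm_sub_le _ _) (norm_nonneg _) hc
      _ ≤ (c + 1) * (‖φ p‖ + ‖φ (-p)‖) := by nlinarith [norm_nonneg (φ p)]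

lemma setIntegral_le_abs_eq {E : Type*} [NormedAddCommGroup E] [NormedSpace ℝ E] {u : ℝ → E}
    (hε : 0 < ε) (hu : IntegrableOn u {p | ε ≤ |p|}) :
    ∫ p in {p | ε ≤ |p|}, u p = ∫ p in Ioi ε, (u p + u (-p)) := by
  have hset : {p : ℝ | ε ≤ |p|} = Iic (-ε) ∪ Ici ε := by
    ext p; simp only [mem_ofPred_eq, mem_union, mem_Iic, mem_Ici, le_abs']
  rw [hset] at hu ⊢
  have hneg : IntegrableOn (fun p => u (-p)) (Ioi ε) := by
    have h := hu.left_of_union.comp_neg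
    rw [neg_Iic, neg_neg] at h
    exact h.mono_set Ioi_subset_Ici_self
  have hdisj : Disjoint (Iic (-ε)) (Ici ε) :=
    Iic_disjoint_Ici.mpr (by linarith)
  rw [setIntegral_union hdisj measurableSet_Ici hu.left_of_union hu.right_of_union,
    integral_Ici_eq_integral_Ioi, ← integral_comp_neg_Ioi,
    integral_add (hu.right_of_union.mono_set Ioi_subset_Ici_self) hneg, add_comm]

lemma integrableOn_kmsWeight_mul (hi : Integrable φ) (hε : 0 < ε) :
    IntegrableOn (fun p => kmsWeight p * φ p) {p | ε ≤ |p|} := by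
  refine hi.integrableOn.bdd_mul (c := (1 - Real.exp (-ε))⁻¹)
    measurable_kmsWeight.aestronglyMeasurable ?_
  filter_upwards [ae_restrict_mem (measurableSet_le measurable_const measurable_abs)] with p hp
  exact norm_kmsWeight_le hε hp

lemma setIntegral_kmsWeight_mul_eq (hi : Integrable φ) (hε : 0 < ε) :
    ∫ p in {p | ε ≤ |p|}, kmsWeight p * φ p = ∫ p in Ioi ε, kmsFold φ p := by
  rw [setIntegral_le_abs_eq hε (integrableOn_kmsWeight_mul hi hε)]
  exact setIntegral_congr_fun measurableSet_Ioi fun p hp => kmsFold_eq (hε.trans hp).ne'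

theorem tendsto_setIntegral_kmsWeight_mul (hm : Measurable φ) (hi : Integrable φ)
    (hb : ∀ p, ‖φ p‖ ≤ C) (hodd : ∀ p, ‖φ p - φ (-p)‖ ≤ K * |p|) :
    Tendsto (fun ε => ∫ p in {p | ε ≤ |p|}, kmsWeight p * φ p) (𝓝[>] 0)
      (𝓝 (∫ p in Ioi 0, kmsFold φ p)) := by
  have h := (integrableOn_kmsFold hm hi hb hodd).continuousWithinAt_Ici_primitive_Ioi
  refine (h.mono_left (nhdsWithin_mono _ Ioi_subset_Ici_self)).congr' ?_
  filter_upwards [self_mem_nhdsWithin] with ε hε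
  exact (setIntegral_kmsWeight_mul_eq hi hε).symm

end Fold

lemma hasDerivAt_kmsFold {Φ : ℝ → ℝ → ℂ} {Φ' : ℝ → ℂ} {t : ℝ}
    (h : ∀ q, HasDerivAt (fun s => Φ s q) (Φ' q) t) (p : ℝ) :
    HasDerivAt (fun s => kmsFold (Φ s) p) (kmsFold Φ' p) t :=
  (((h p).sub (h (-p))).const_mul (kmsWeight p)).add (h (-p))

lemma norm_kmsFold_le_of_norm_le_abs_mul {φ : ℝ → ℂ} {G : ℝ → ℝ}
    (hφ : ∀ q, ‖φ q‖ ≤ |q| * G q) {p : ℝ} (hp : 0 < p) :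
    ‖kmsFold φ p‖ ≤ 2 * ((1 + |p|) * G p + (1 + |-p|) * G (-p)) := by
  have hpos := hφ p
  have hneg := hφ (-p)
  rw [abs_of_pos hp] at hpos ⊢
  rw [abs_neg, abs_of_pos hp] at hneg ⊢
  have hGpos : 0 ≤ G p := (mul_nonneg_iff_of_pos_left hp).mp ((norm_nonneg _).trans hpos)
  have hGneg : 0 ≤ G (-p) := (mul_nonneg_iff_of_pos_left hp).mp ((norm_nonneg _).trans hneg)
  calc ‖kmsFold φ p‖ ≤ ‖kmsWeight p‖ * (p * G p + p * G (-p)) + p * G (-p) := by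
        refine (norm_kmsFold_le p).trans (add_le_add ?_ hneg)
        gcongr
        exact (norm_sub_le _ _).trans (add_le_add hpos hneg)
    _ = ‖kmsWeight p‖ * p * (G p + G (-p)) + p * G (-p) := by ring
    _ ≤ (1 + p) * (G p + G (-p)) + (1 + p) * G (-p) := by
        gcongr
        · exact norm_kmsWeight_mul_le hp
        · linarith
    _ ≤ 2 * ((1 + p) * G p + (1 + p) * G (-p)) := by nlinarith

lemma hasDerivAt_cexp_mul_ofReal_mul (c a : ℂ) (t : ℝ) :
    HasDerivAt (fun s : ℝ => cexp (c * s) * a) (cexp (c * t) * (c * a)) t := by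
  have h := (((hasDerivAt_id t).ofReal_comp).const_mul c).cexp.mul_const a
  simpa [mul_comm, mul_left_comm, mul_assoc] using h

theorem hasDerivAt_integral_kmsFold_modulate {u : ℝ → ℂ} (hm : Measurable u)
    (hu : Integrable fun p => (1 + |p|) * ‖u p‖) {t : ℝ}
    (ht : IntegrableOn (kmsFold fun p => cexp (I * p * t) * u p) (Ioi 0)) :
    HasDerivAt (fun s : ℝ => ∫ p in Ioi 0, kmsFold (fun p => cexp (I * p * s) * u p) p)
      (∫ p in Ioi 0, kmsFold (fun p => cexp (I * p * t) * (I * p * u p)) p) t := by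
  refine (hasDerivAt_integral_of_dominated_loc_of_deriv_le (𝕜 := ℝ) (x₀ := t)
    (F := fun s => kmsFold fun p => cexp (I * p * s) * u p)
    (F' := fun s => kmsFold fun p => cexp (I * p * s) * (I * p * u p))
    (bound := fun p => 2 * ((1 + |p|) * ‖u p‖ + (1 + |-p|) * ‖u (-p)‖)) univ_mem
    (Eventually.of_forall fun s => (measurable_kmsFold (by fun_prop)).aestronglyMeasurable) ht
    (measurable_kmsFold (by fun_prop)).aestronglyMeasurable ?_
    ((hu.add hu.comp_neg).const_mul 2).integrableOn ?_).2
  · filter_upwards [ae_restrict_mem measurableSet_Ioi] with p hp s _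
    refine norm_kmsFold_le_of_norm_le_abs_mul (G := fun q => ‖u q‖) (fun q => le_of_eq ?_) hp
    rw [norm_mul, norm_mul, norm_mul, Complex.norm_exp]
    simp
  · refine ae_of_all _ fun p s _ => hasDerivAt_kmsFold (fun q => ?_) p
    simpa [mul_assoc, mul_left_comm, mul_comm] using
      hasDerivAt_cexp_mul_ofReal_mul (I * q) (u q) s

namespace SchwartzMap

lemma exists_norm_sub_comp_neg_le (φ : 𝓢(ℝ, ℂ)) :
    ∃ K : ℝ, ∀ p, ‖φ p - φ (-p)‖ ≤ K * |p| := by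
  have hlip := lipschitzWith_of_nnnorm_deriv_le φ.differentiable fun x => by
    simpa [derivCLM_apply] using
      (derivCLM ℝ ℂ φ).toBoundedContinuousFunction.nnnorm_coe_le_nnnorm x
  refine ⟨2 * ‖(derivCLM ℝ ℂ φ).toBoundedContinuousFunction‖₊, fun p => ?_⟩
  calc ‖φ p - φ (-p)‖ ≤ _ * ‖p - -p‖ := hlip.norm_sub_le p (-p)
    _ = _ := by rw [sub_neg_eq_add, ← two_mul, norm_mul, Real.norm_eq_abs]; norm_num; ring

lemma integrableOn_kmsFold (φ : 𝓢(ℝ, ℂ)) : IntegrableOn (kmsFold φ) (Ioi 0) := by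
  obtain ⟨K, hK⟩ := φ.exists_norm_sub_comp_neg_le
  exact _root_.integrableOn_kmsFold φ.continuous.measurable φ.integrable
    (φ.norm_le_seminorm ℝ) hK

lemma tendsto_setIntegral_kmsWeight_mul (φ : 𝓢(ℝ, ℂ)) :
    Tendsto (fun ε => ∫ p in {p | ε ≤ |p|}, kmsWeight p * φ p) (𝓝[>] 0)
      (𝓝 (∫ p in Ioi 0, kmsFold φ p)) := by
  obtain ⟨K, hK⟩ := φ.exists_norm_sub_comp_neg_le
  exact _root_.tendsto_setIntegral_kmsWeight_mul φ.continuous.measurable φ.integrable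
    (φ.norm_le_seminorm ℝ) hK

lemma integrable_one_add_abs_mul (φ : 𝓢(ℝ, ℂ)) : Integrable fun p => (1 + |p|) * ‖φ p‖ := by
  refine (φ.integrable.norm.add (φ.integrable_pow_mul volume 1)).congr (ae_of_all _ fun p => ?_)
  simp only [Pi.add_apply, pow_one, Real.norm_eq_abs]
  ring

end SchwartzMap

lemma fourierHat_eq_fourier (u : ℝ → ℂ) (p : ℝ) :
    fourierHat u p = (Real.sqrt (2 * Real.pi) : ℂ)⁻¹ * 𝓕 u (p / (2 * Real.pi)) := by
  rw [fourierHat, Real.fourier_real_eq_integral_exp_smul]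
  congr 2 with x
  have : -2 * Real.pi * x * (p / (2 * Real.pi)) = -(p * x) := by field_simp
  rw [smul_eq_mul, this]
  push_cast
  ring_nf

lemma fourierHat_comp_add (u : ℝ → ℂ) (s p : ℝ) :
    fourierHat (fun x => u (x + s)) p = cexp (I * p * s) * fourierHat u p := by
  have h : ∀ x : ℝ, cexp (-I * p * x) * u (x + s)
      = cexp (I * p * s) * (cexp (-I * p * ↑(x + s)) * u (x + s)) := fun x => by
    rw [← mul_assoc, ← Complex.exp_add]; push_cast; ring_nf
  simp_rw [fourierHat, h, integral_const_mul]
  rw [integral_add_right_eq_self (fun x : ℝ => cexp (-I * p * x) * u x) s]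
  ring

lemma fourierHat_derivCLM (g : 𝓢(ℝ, ℂ)) (p : ℝ) :
    fourierHat (SchwartzMap.derivCLM ℝ ℂ g) p = I * p * fourierHat g p := by
  have hg' : ⇑(SchwartzMap.derivCLM ℝ ℂ g) = deriv g := by
    ext; simp [SchwartzMap.derivCLM_apply]
  rw [hg', fourierHat_eq_fourier, fourierHat_eq_fourier, Real.fourier_deriv g.integrable
    g.differentiable (hg' ▸ (SchwartzMap.derivCLM ℝ ℂ g).integrable)]
  have := Real.pi_ne_zero
  simp only [smul_eq_mul]
  push_cast
  field_simp

noncomputable def fourierHatSchwartz (f : 𝓢(ℝ, ℂ)) : 𝓢(ℝ, ℂ) :=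
  (Real.sqrt (2 * Real.pi) : ℂ)⁻¹ • SchwartzMap.compCLMOfContinuousLinearEquiv ℂ
    (ContinuousLinearEquiv.unitsEquivAut ℝ (Units.mk0 (2 * Real.pi)⁻¹ (by positivity))) (𝓕 f)

lemma fourierHatSchwartz_apply (f : 𝓢(ℝ, ℂ)) (p : ℝ) :
    fourierHatSchwartz f p = fourierHat f p := by
  simp [fourierHatSchwartz, fourierHat_eq_fourier, SchwartzMap.fourier_coe, div_eq_mul_inv]

noncomputable def crossSpectrum (f g : 𝓢(ℝ, ℂ)) : 𝓢(ℝ, ℂ) :=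
  SchwartzMap.pairing (ContinuousLinearMap.mul ℝ ℂ)
    (SchwartzMap.postcompCLM (conjCLE : ℂ →L[ℝ] ℂ) (fourierHatSchwartz f)) (fourierHatSchwartz g)

lemma crossSpectrum_apply (f g : 𝓢(ℝ, ℂ)) (p : ℝ) :
    crossSpectrum f g p = starRingEnd ℂ (fourierHat f p) * fourierHat g p := by
  simp [crossSpectrum, fourierHatSchwartz_apply]

lemma coe_compSubConstCLM_neg (g : 𝓢(ℝ, ℂ)) (s : ℝ) :
    ⇑(g.compSubConstCLM ℂ (-s)) = fun x => g (x + s) := by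
  ext; simp

lemma crossSpectrum_compSubConstCLM (f g : 𝓢(ℝ, ℂ)) (s : ℝ) :
    ⇑(crossSpectrum f (g.compSubConstCLM ℂ (-s)))
      = fun p : ℝ => cexp (I * p * s) * crossSpectrum f g p := by
  ext p
  rw [crossSpectrum_apply, crossSpectrum_apply, coe_compSubConstCLM_neg, fourierHat_comp_add]
  ring

lemma crossSpectrum_derivCLM_apply (f g : 𝓢(ℝ, ℂ)) (p : ℝ) :
    crossSpectrum f (SchwartzMap.derivCLM ℝ ℂ g) p = I * p * crossSpectrum f g p := by
  rw [crossSpectrum_apply, crossSpectrum_apply, fourierHat_derivCLM]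
  ring

theorem twoPoint_eq_integral_kmsFold (f g : 𝓢(ℝ, ℂ)) :
    twoPoint f g = ∫ p in Ioi 0, kmsFold (crossSpectrum f g) p := by
  refine ((crossSpectrum f g).tendsto_setIntegral_kmsWeight_mul.congr fun ε => ?_).limUnder_eq
  simp only [crossSpectrum_apply, kmsWeight, mul_assoc]

theorem twoPoint_comp_add (f g : 𝓢(ℝ, ℂ)) (s : ℝ) :
    twoPoint f (fun x => g (x + s))
      = ∫ p in Ioi 0, kmsFold (fun p => cexp (I * p * s) * crossSpectrum f g p) p := by
  rw [← coe_compSubConstCLM_neg, twoPoint_eq_integral_kmsFold, crossSpectrum_compSubConstCLM]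

/-- For Schwartz functions `f, g`, the map `t ↦ θ(f, g(·+t))` is differentiable on `ℝ`
with derivative `θ(f, g′(·+t))` at every `t`. -/
theorem twoPoint_translate_hasDerivAt (f g : SchwartzMap ℝ ℂ) (t : ℝ) :
    HasDerivAt (fun s : ℝ => twoPoint (⇑f) (fun x => g (x + s)))
      (twoPoint (⇑f) (fun x => deriv (⇑g) (x + t))) t := by
  have hg' : (fun x => deriv g (x + t)) = fun x => SchwartzMap.derivCLM ℝ ℂ g (x + t) := by
    simp [SchwartzMap.derivCLM_apply]
  have ht : IntegrableOn (kmsFold fun p => cexp (I * p * t) * crossSpectrum f g p) (Ioi 0) :=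
    crossSpectrum_compSubConstCLM f g t ▸ (crossSpectrum f _).integrableOn_kmsFold
  simp only [hg', twoPoint_comp_add, crossSpectrum_derivCLM_apply]
  exact hasDerivAt_integral_kmsFold_modulate (crossSpectrum f g).continuous.measurable
    (crossSpectrum f g).integrable_one_add_abs_mul ht
end

section
/- Let α be a type and θ : α → α → ℂ. For n ≥ 0 define E_n : α^{2n} → ℂ recursively by E_0 = 1 and E_n(f_1, …, f_{2n}) = Σ_{j=2}^{2n} (−1)^j θ(f_1, f_j) · E_{n−1}(f_2, …, f_{j−1}, f_{j+1}, …, f_{2n}) (the arguments f_1 and f_j are omitted). Then for every n and every tuple (f_1, …, f_{2n}): E_n(f_1, …, f_{2n}) = Σ_σ sgn(σ) Π_{k=1}^{n} θ(f_{σ(2k−1)}, f_{σ(2k)}), where the sum runs over all permutations σ of {1, …, 2n} satisfying σ(2k−1) < σ(2k) for k = 1, …, n and σ(1) < σ(3) < ⋯ < σ(2n−1), and sgn(σ) is the sign of σ. -/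
/-!
A pairing of `{0, …, 2n+1}` whose pairs are listed by increasing first element starts with a
pair `(0, j + 1)`. Deleting it and relabelling the remaining indices order-preservingly gives a
pairing of `{0, …, 2n-1}`, and this is a bijection. Moving `j + 1` next to `0` is a cycle of
length `j + 1`, which contributes the sign `(-1)^j`; so the sum over pairings satisfies the
defining recursion of `quasiFreeE`.
-/

open Finset

/-- The recursively defined quasi-free expansion: `E 0 = 1` and (in 1-based notation)
`E n (f₁,…,f_{2n}) = ∑_{j=2}^{2n} (-1)^j θ(f₁,f_j) · E (n-1) (f₂,…,f̌_j,…,f_{2n})`,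
where the arguments `f₁` and `f_j` are omitted. -/
noncomputable def quasiFreeE {α : Type*} (θ : α → α → ℂ) :
    (n : ℕ) → (Fin (2 * n) → α) → ℂ
  | 0, _ => 1
  | n + 1, f =>
      ∑ j : Fin (2 * n + 1),
        (-1 : ℂ) ^ (j : ℕ) *
          θ (f ⟨0, by omega⟩) (f ⟨(j : ℕ) + 1, by have := j.isLt; omega⟩) *
          quasiFreeE θ n (fun i =>
            f ⟨((j.succAbove i : Fin (2 * n + 1)) : ℕ) + 1, by
                have := (j.succAbove i).isLt; omega⟩)

open Equiv Equiv.Perm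

namespace Equiv.Perm

variable {m : ℕ}

lemma exists_decomposeFin_symm_zero_eq {σ : Perm (Fin (m + 1))} (h : σ 0 = 0) :
    ∃ τ : Perm (Fin m), decomposeFin.symm (0, τ) = σ := by
  refine ⟨(decomposeFin σ).2, ?_⟩
  have hfst : (decomposeFin σ).1 = 0 := by
    rw [← h, ← decomposeFin_symm_apply_zero (decomposeFin σ).1 (decomposeFin σ).2, Prod.mk.eta,
      Equiv.symm_apply_apply]
  rw [← hfst, Prod.mk.eta, Equiv.symm_apply_apply]

/-- Pairs `0` with `j + 1` and pairs the remaining `2, 3, …` according to `τ`, relabelled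
order-preservingly by `j.succAbove`. -/
noncomputable def insertPair (j : Fin (m + 1)) (τ : Perm (Fin m)) : Perm (Fin (m + 2)) :=
  decomposeFin.symm (0, (Fin.cycleRange j).symm * decomposeFin.symm (0, τ))

variable (j : Fin (m + 1)) (τ : Perm (Fin m))

@[simp] lemma insertPair_zero : insertPair j τ 0 = 0 := decomposeFin_symm_apply_zero _ _

@[simp] lemma insertPair_one : insertPair j τ 1 = j.succ := by
  simp [insertPair]

@[simp] lemma insertPair_succ_succ (i : Fin m) :
    insertPair j τ i.succ.succ = (j.succAbove (τ i)).succ := by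
  simp [insertPair]

lemma sign_insertPair : sign (insertPair j τ) = (-1) ^ (j : ℕ) * sign τ := by
  simp [insertPair, Fin.sign_cycleRange]

lemma exists_insertPair_eq {σ : Perm (Fin (m + 2))} (h : σ 0 = 0) :
    ∃ j τ, insertPair j τ = σ := by
  obtain ⟨σ', rfl⟩ := exists_decomposeFin_symm_zero_eq h
  obtain ⟨τ, hτ⟩ := exists_decomposeFin_symm_zero_eq (σ := Fin.cycleRange (σ' 0) * σ')
    (by simp)
  exact ⟨σ' 0, τ, by rw [insertPair, hτ, ← Perm.inv_def, inv_mul_cancel_left]⟩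

lemma insertPair_injective :
    Function.Injective (fun p : Fin (m + 1) × Perm (Fin m) => insertPair p.1 p.2) := by
  rintro ⟨j, τ⟩ ⟨j', τ'⟩ h
  have hj : j = j' := Fin.succ_injective _ <| by
    simpa using congr($h 1)
  subst hj
  refine Prod.ext rfl (Equiv.ext fun i => ?_)
  simpa using congr($h i.succ.succ)

end Equiv.Perm

section Pairing

variable {n : ℕ}

def pairFst (k : Fin n) : Fin (2 * n) := ⟨2 * k, by omega⟩

def pairSnd (k : Fin n) : Fin (2 * n) := ⟨2 * k + 1, by omega⟩

@[simp] lemma pairFst_zero : pairFst (0 : Fin (n + 1)) = 0 := rfl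

@[simp] lemma pairSnd_zero : pairSnd (0 : Fin (n + 1)) = 1 := rfl

@[simp] lemma pairFst_succ (k : Fin n) : pairFst k.succ = (pairFst k).succ.succ := by
  ext; simp only [pairFst, Fin.val_succ]; omega

@[simp] lemma pairSnd_succ (k : Fin n) : pairSnd k.succ = (pairSnd k).succ.succ := by
  ext; simp only [pairSnd, Fin.val_succ]; omega

lemma exists_eq_pairFst_or_eq_pairSnd (i : Fin (2 * n)) : ∃ k, i = pairFst k ∨ i = pairSnd k := by
  refine ⟨⟨i / 2, by omega⟩, ?_⟩
  rcases Nat.even_or_odd' i with ⟨q, h | h⟩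
  · left; ext; simp only [pairFst]; omega
  · right; ext; simp only [pairSnd]; omega

end Pairing

def IsPairing {n : ℕ} (σ : Perm (Fin (2 * n))) : Prop :=
  (∀ k, σ (pairFst k) < σ (pairSnd k)) ∧ ∀ k l, k < l → σ (pairFst k) < σ (pairFst l)

instance {n : ℕ} : DecidablePred (IsPairing (n := n)) := fun _ =>
  inferInstanceAs (Decidable (_ ∧ _))

noncomputable def pairingTerm {α : Type*} (θ : α → α → ℂ) {n : ℕ} (f : Fin (2 * n) → α)
    (σ : Perm (Fin (2 * n))) : ℂ :=
  (sign σ : ℤ) * ∏ k, θ (f (σ (pairFst k))) (f (σ (pairSnd k)))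

namespace IsPairing

variable {n : ℕ}

lemma apply_zero {σ : Perm (Fin (2 * (n + 1)))} (hσ : IsPairing σ) : σ 0 = 0 := by
  obtain ⟨k, hk | hk⟩ := exists_eq_pairFst_or_eq_pairSnd (σ.symm 0)
  · rcases eq_or_ne k 0 with rfl | hk0
    · rw [pairFst_zero, symm_apply_eq] at hk
      exact hk.symm
    · simpa [← hk] using hσ.2 0 k (Fin.pos_iff_ne_zero.2 hk0)
  · simpa [← hk] using hσ.1 k

end IsPairing

@[simp] lemma isPairing_insertPair_iff {n : ℕ} (j : Fin (2 * n + 1)) (τ : Perm (Fin (2 * n))) :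
    IsPairing (n := n + 1) (insertPair j τ) ↔ IsPairing τ := by
  simp [IsPairing, Fin.forall_fin_succ, Fin.succ_pos, Fin.succAbove_lt_succAbove_iff]

lemma sum_isPairing_succ {M : Type*} [AddCommMonoid M] {n : ℕ}
    (F : Perm (Fin (2 * (n + 1))) → M) :
    ∑ σ with IsPairing σ, F σ =
      ∑ j : Fin (2 * n + 1), ∑ τ with IsPairing τ, F (insertPair j τ) := by
  rw [← sum_product']
  symm
  refine sum_nbij (fun p => insertPair p.1 p.2) ?_ insertPair_injective.injOn ?_ fun _ _ => rfl
  · rintro ⟨j, τ⟩ hp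
    simpa using hp
  · intro σ hσ
    obtain ⟨j, τ, rfl⟩ := exists_insertPair_eq (mem_filter.1 hσ).2.apply_zero
    exact ⟨(j, τ), by simpa using hσ, rfl⟩

lemma pairingTerm_insertPair {α : Type*} (θ : α → α → ℂ) {n : ℕ} (f : Fin (2 * (n + 1)) → α)
    (j : Fin (2 * n + 1)) (τ : Perm (Fin (2 * n))) :
    pairingTerm θ f (insertPair j τ) =
      (-1) ^ (j : ℕ) * θ (f 0) (f j.succ) * pairingTerm θ (fun i => f (j.succAbove i).succ) τ := by
  simp only [pairingTerm, sign_insertPair, Fin.prod_univ_succ, pairFst_zero, pairSnd_zero,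
    pairFst_succ, pairSnd_succ, insertPair_zero, insertPair_one, insertPair_succ_succ]
  push_cast
  ring

/-- Pfaffian-type expansion: the recursively defined `quasiFreeE` equals the sum over
all perfect pairings, i.e. permutations `σ` of `{1,…,2n}` with `σ(2k-1) < σ(2k)` and
`σ(1) < σ(3) < ⋯ < σ(2n-1)`, of `sgn(σ) ∏_k θ(f_{σ(2k-1)}, f_{σ(2k)})`
(written here in 0-based indexing). -/
theorem quasiFreeE_eq_pfaffian {α : Type*} (θ : α → α → ℂ) (n : ℕ) (f : Fin (2 * n) → α) :
    quasiFreeE θ n f =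
      ∑ σ ∈ Finset.univ.filter (fun σ : Equiv.Perm (Fin (2 * n)) =>
          (∀ k : Fin n,
            σ ⟨2 * (k : ℕ), by have := k.isLt; omega⟩ <
              σ ⟨2 * (k : ℕ) + 1, by have := k.isLt; omega⟩) ∧
          (∀ k l : Fin n, k < l →
            σ ⟨2 * (k : ℕ), by have := k.isLt; omega⟩ <
              σ ⟨2 * (l : ℕ), by have := l.isLt; omega⟩)),
        ((Equiv.Perm.sign σ : ℤ) : ℂ) *
          ∏ k : Fin n,
            θ (f (σ ⟨2 * (k : ℕ), by have := k.isLt; omega⟩))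
              (f (σ ⟨2 * (k : ℕ) + 1, by have := k.isLt; omega⟩)) := by
  change quasiFreeE θ n f = ∑ σ with IsPairing σ, pairingTerm θ f σ
  induction n with
  | zero => simp [quasiFreeE, pairingTerm, IsPairing]
  | succ n ih =>
    rw [quasiFreeE, sum_isPairing_succ]
    refine sum_congr rfl fun j _ => ?_
    simp only [ih, mul_sum, pairingTerm_insertPair]
    rfl
end

section
/- Let ι be an index type and λ : ι → ℝ a nonnegative summable family (λ_i ≥ 0 for all i, and Σ_i λ_i < ∞). Then there exists a constant c > 0 such that for all finite subsets s, t ⊆ ι with s ∩ t = ∅: ( Π_{i∈s} λ_i ) · ( Π_{i∈t} (1 + λ_i) ) ≤ c · ( Π_{i∈s} min(λ_i, 1/2) ) · ( Π_{i∈t} (1 − min(λ_i, 1/2)) ). -/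
/-- Uniform comparison of products over a nonnegative summable family `λ`: there is a
constant `c > 0` such that for all disjoint finite sets `s, t` of indices,
`(∏_{i∈s} λᵢ) (∏_{i∈t} (1+λᵢ)) ≤ c (∏_{i∈s} min(λᵢ, 1/2)) (∏_{i∈t} (1 - min(λᵢ, 1/2)))`. -/
theorem prod_comparison_of_summable
    {ι : Type*} (lam : ι → ℝ) (hnn : ∀ i, 0 ≤ lam i) (hsum : Summable lam) :
    ∃ c : ℝ, 0 < c ∧ ∀ s t : Finset ι, Disjoint s t →
      (∏ i ∈ s, lam i) * (∏ i ∈ t, (1 + lam i)) ≤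
        c * ((∏ i ∈ s, min (lam i) (1 / 2)) * (∏ i ∈ t, (1 - min (lam i) (1 / 2)))) := by
  set μ : ι → ℝ := fun i => min (lam i) (1 / 2) with hμ
  have hμnn : ∀ i, 0 ≤ μ i := fun i => le_min (hnn i) (by norm_num)
  have hμle : ∀ i, μ i ≤ 1 / 2 := fun i => min_le_right _ _
  have hexpsq : ∀ i, (1 + 2 * lam i) ^ 2 ≤ Real.exp (4 * lam i) := by
    intro i
    have h1 : 1 + 2 * lam i ≤ Real.exp (2 * lam i) := by
      have := Real.add_one_le_exp (2 * lam i); linarith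
    have h2 : Real.exp (2 * lam i) * Real.exp (2 * lam i) = Real.exp (4 * lam i) := by
      rw [← Real.exp_add]; ring_nf
    nlinarith [hnn i, Real.exp_pos (2 * lam i)]
  have key1 : ∀ i, lam i ≤ Real.exp (4 * lam i) * μ i := by
    intro i
    have hexp := Real.add_one_le_exp (4 * lam i)
    rcases le_or_gt (lam i) (1 / 2) with h | h
    · rw [hμ]; simp only [min_eq_left h]
      nlinarith [hnn i]
    · rw [hμ]; simp only [min_eq_right h.le]
      nlinarith [hnn i]
  have key2 : ∀ i, 1 + lam i ≤ Real.exp (4 * lam i) * (1 - μ i) := by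
    intro i
    have hsq := hexpsq i
    rcases le_or_gt (lam i) (1 / 2) with h | h
    · rw [hμ]; simp only [min_eq_left h]
      have h1 : (1 + 2 * lam i) ^ 2 * (1 - lam i) ≤ Real.exp (4 * lam i) * (1 - lam i) :=
        mul_le_mul_of_nonneg_right hsq (by linarith)
      have h2 : 0 ≤ lam i * (1 - 2 * lam i ^ 2) :=
        mul_nonneg (hnn i) (by nlinarith [hnn i])
      nlinarith [hnn i]
    · rw [hμ]; simp only [min_eq_right h.le]
      nlinarith [hnn i]
  set T : ℝ := ∑' i, lam i with hT
  refine ⟨Real.exp (4 * T) * Real.exp (4 * T), by positivity, fun s t _ => ?_⟩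
  have hsumbound : ∀ u : Finset ι, ∑ i ∈ u, lam i ≤ T :=
    fun u => Summable.sum_le_tsum u (fun i _ => hnn i) hsum
  have hexpprod : ∀ u : Finset ι, ∏ i ∈ u, Real.exp (4 * lam i) ≤ Real.exp (4 * T) := by
    intro u
    rw [← Real.exp_sum]
    apply Real.exp_le_exp.mpr
    rw [← Finset.mul_sum]
    nlinarith [hsumbound u]
  have hs : ∏ i ∈ s, lam i ≤ Real.exp (4 * T) * ∏ i ∈ s, μ i := by
    calc ∏ i ∈ s, lam i ≤ ∏ i ∈ s, (Real.exp (4 * lam i) * μ i) :=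
          Finset.prod_le_prod (fun i _ => hnn i) (fun i _ => key1 i)
      _ = (∏ i ∈ s, Real.exp (4 * lam i)) * ∏ i ∈ s, μ i := Finset.prod_mul_distrib
      _ ≤ Real.exp (4 * T) * ∏ i ∈ s, μ i := by
          apply mul_le_mul_of_nonneg_right (hexpprod s)
          exact Finset.prod_nonneg (fun i _ => hμnn i)
  have ht : ∏ i ∈ t, (1 + lam i) ≤ Real.exp (4 * T) * ∏ i ∈ t, (1 - μ i) := by
    calc ∏ i ∈ t, (1 + lam i) ≤ ∏ i ∈ t, (Real.exp (4 * lam i) * (1 - μ i)) :=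
          Finset.prod_le_prod (fun i _ => by nlinarith [hnn i]) (fun i _ => key2 i)
      _ = (∏ i ∈ t, Real.exp (4 * lam i)) * ∏ i ∈ t, (1 - μ i) := Finset.prod_mul_distrib
      _ ≤ Real.exp (4 * T) * ∏ i ∈ t, (1 - μ i) := by
          apply mul_le_mul_of_nonneg_right (hexpprod t)
          exact Finset.prod_nonneg (fun i _ => by nlinarith [hμle i])
  calc (∏ i ∈ s, lam i) * (∏ i ∈ t, (1 + lam i))
      ≤ (Real.exp (4 * T) * ∏ i ∈ s, μ i) * (Real.exp (4 * T) * ∏ i ∈ t, (1 - μ i)) := by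
        exact mul_le_mul hs ht
          (Finset.prod_nonneg (fun i _ => by nlinarith [hnn i]))
          (mul_nonneg (Real.exp_pos _).le (Finset.prod_nonneg (fun i _ => hμnn i)))
    _ = Real.exp (4 * T) * Real.exp (4 * T) *
          ((∏ i ∈ s, min (lam i) (1 / 2)) * (∏ i ∈ t, (1 - min (lam i) (1 / 2)))) := by
        ring
end
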